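/- Define the entire function Z₁ : ℂ → ℂ by Z₁(λ) = cos(π√(λ² − 1/4)) — equivalently Z₁(λ) = Σ_{n=0}^∞ (−1)ⁿ π^{2n} (λ² − 1/4)ⁿ/(2n)!, the value being independent of the branch of the square root since cosine is even. Then Z₁ is a generating function for phase shift at Fresnel number 𝔣 = 1: Z₁ is of sine-type, its zero set is exactly {√(k² + k + 1/2) : k ∈ ℕ} ∪ {−√(k² + k + 1/2) : k ∈ ℕ}, all zeros are real and simple, and each zero λ satisfies λ² = l + 1/2 with l = k² + k an integer. -/

import Mathlib

open MeasureTheory Complex Filter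
open scoped FourierTransform Real Topology

noncomputable section

structure IsSineType (Z : ℂ → ℂ) : Prop where
  entire : Differentiable ℂ Z
  separated : ∃ c > 0, ∀ lam ∈ {z : ℂ | Z z = 0}, ∀ mu ∈ {z : ℂ | Z z = 0},
      lam ≠ mu → c ≤ ‖lam - mu‖
  bounds : ∃ A > 0, ∃ B > 0, ∃ H > 0, ∀ lam : ℂ, H ≤ |lam.im| →
      B * Real.exp (π * |lam.im|) ≤ ‖Z lam‖ ∧
      ‖Z lam‖ ≤ A * Real.exp (π * |lam.im|)

structure IsGeneratingPhase (f : ℝ) (Z : ℂ → ℂ) : Prop where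
  sineType : IsSineType Z
  realZeros : ∀ z : ℂ, Z z = 0 → ∃ x : ℝ, z = (x : ℂ)
  simpleZeros : ∀ z : ℂ, Z z = 0 → deriv Z z ≠ 0
  quantized : ∀ z : ℂ, Z z = 0 → ∃ l : ℤ, z ^ 2 = (f : ℂ) * ((l : ℂ) + 1 / 2)

/-!
Since cosine is even, `cos (π w)` depends only on `w ^ 2`, so `Z₁ = g ∘ (λ ↦ λ ^ 2 - 1/4)` with
`g u = cos (π √u)` for any choice of square root. Locally `√u` can be taken holomorphic away from
`u = 0` (the principal branch, or `i √(-u)`), and `g` is continuous at `0`, so `g` is entire.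
The zeros are given by `√(λ ^ 2 - 1/4) = k + 1/2`, i.e. `λ ^ 2 = k ^ 2 + k + 1/2`, and two distinct
ones are at least `1/2` apart. For `w ^ 2 = λ ^ 2 - 1/4` one has
`|Im λ| ≤ |Im w| ≤ |Im λ| + 1/2`, which transfers the growth `|cos (π w)| ≍ exp (π |Im w|)`
to `Z₁`.
-/

namespace Complex

theorem cos_mul_eq_cos_mul_of_sq_eq (c : ℂ) {v w : ℂ} (h : v ^ 2 = w ^ 2) :
    cos (c * v) = cos (c * w) := by
  rcases sq_eq_sq_iff_eq_or_eq_neg.1 h with rfl | rfl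
  · rfl
  · rw [mul_neg, cos_neg]

theorem cpow_one_half_sq (u : ℂ) : (u ^ (1 / 2 : ℂ)) ^ 2 = u := by
  simp

theorem cos_mul_cpow_one_half_eq_of_sq_eq (c : ℂ) {u w : ℂ} (h : w ^ 2 = u) :
    cos (c * u ^ (1 / 2 : ℂ)) = cos (c * w) :=
  cos_mul_eq_cos_mul_of_sq_eq c (by rw [cpow_one_half_sq, h])

theorem differentiableAt_cos_mul_cpow_one_half (c : ℂ) {u : ℂ} (hu : u ≠ 0) :
    DifferentiableAt ℂ (fun u => cos (c * u ^ (1 / 2 : ℂ))) u := by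
  rcases mem_slitPlane_or_neg_mem_slitPlane hu with hslit | hslit
  · exact ((differentiableAt_id.cpow_const hslit).const_mul c).ccos
  · -- `I * (-u) ^ (1/2)` is a square root of `u` that is holomorphic near `u`
    have hI : (fun u => cos (c * u ^ (1 / 2 : ℂ))) =
        fun u => cos (c * (I * (-u) ^ (1 / 2 : ℂ))) := funext fun v =>
      cos_mul_cpow_one_half_eq_of_sq_eq c (by rw [mul_pow, I_sq, cpow_one_half_sq]; ring)
    rw [hI]
    exact (((differentiableAt_id.neg.cpow_const hslit).const_mul I).const_mul c).ccos

theorem differentiable_cos_mul_cpow_one_half (c : ℂ) :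
    Differentiable ℂ fun u => cos (c * u ^ (1 / 2 : ℂ)) := by
  intro u
  rcases eq_or_ne u 0 with rfl | hu
  · -- `u ^ (1/2)` is continuous at the branch point, which is therefore a removable singularity
    refine (analyticAt_of_differentiable_on_punctured_nhds_of_continuousAt ?_ ?_).differentiableAt
    · filter_upwards [self_mem_nhdsWithin] with v hv
      exact differentiableAt_cos_mul_cpow_one_half c hv
    · exact continuous_cos.continuousAt.comp <| continuousAt_const.mul <|
        continuousAt_cpow_const_of_re_pos (Or.inl le_rfl) (by norm_num)
  · exact differentiableAt_cos_mul_cpow_one_half c hu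

theorem cos_pi_mul_eq_zero_iff {w : ℂ} : cos (π * w) = 0 ↔ ∃ k : ℤ, w = k + 1 / 2 := by
  rw [cos_eq_zero_iff]
  refine exists_congr fun k => ⟨fun h => ?_, fun h => by rw [h]; ring⟩
  exact mul_left_cancel₀ (ofReal_ne_zero.2 Real.pi_ne_zero) (h.trans (by ring))

theorem cos_pi_mul_cpow_one_half_eq_zero_iff {u : ℂ} :
    cos (π * u ^ (1 / 2 : ℂ)) = 0 ↔ ∃ k : ℤ, u = (k + 1 / 2) ^ 2 := by
  constructor
  · intro h
    obtain ⟨k, hk⟩ := cos_pi_mul_eq_zero_iff.1 h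
    exact ⟨k, by rw [← hk, cpow_one_half_sq]⟩
  · rintro ⟨k, rfl⟩
    rw [cos_mul_cpow_one_half_eq_of_sq_eq _ rfl]
    exact cos_pi_mul_eq_zero_iff.2 ⟨k, rfl⟩

theorem deriv_cos_mul_cpow_one_half_ne_zero {c u : ℂ} (hc : c ≠ 0) (hu : u ∈ slitPlane)
    (hcos : cos (c * u ^ (1 / 2 : ℂ)) = 0) :
    deriv (fun u => cos (c * u ^ (1 / 2 : ℂ))) u ≠ 0 := by
  have hsin : sin (c * u ^ (1 / 2 : ℂ)) ≠ 0 := by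
    intro hsin
    have h := sin_sq_add_cos_sq (c * u ^ (1 / 2 : ℂ))
    rw [hsin, hcos] at h
    norm_num at h
  have hderiv : HasDerivAt (fun u => cos (c * u ^ (1 / 2 : ℂ))) _ u :=
    (((hasDerivAt_id u).cpow_const hu).const_mul c).ccos
  rw [hderiv.deriv]
  have hpow : u ^ (1 / 2 - 1 : ℂ) ≠ 0 := cpow_ne_zero_iff.2 (Or.inl (slitPlane_ne_zero hu))
  exact mul_ne_zero (neg_ne_zero.2 hsin)
    (mul_ne_zero hc (mul_ne_zero (mul_ne_zero (by norm_num) hpow) one_ne_zero))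

theorem norm_exp_mul_I (ζ : ℂ) : ‖exp (ζ * I)‖ = Real.exp (-ζ.im) := by
  simp [norm_exp]

theorem norm_cos_le_exp_abs_im (ζ : ℂ) : ‖cos ζ‖ ≤ Real.exp |ζ.im| := by
  have h := norm_add_le (exp (ζ * I)) (exp (-ζ * I))
  rw [← two_cos, norm_mul, norm_exp_mul_I, norm_exp_mul_I, neg_im, neg_neg] at h
  have h₁ := Real.exp_le_exp.2 (neg_le_abs ζ.im)
  have h₂ := Real.exp_le_exp.2 (le_abs_self ζ.im)
  norm_num at h
  linarith

theorem exp_abs_im_sub_one_le_two_mul_norm_cos (ζ : ℂ) :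
    Real.exp |ζ.im| - 1 ≤ 2 * ‖cos ζ‖ := by
  have h₁ := norm_sub_norm_le (exp (ζ * I)) (-exp (-ζ * I))
  have h₂ := norm_sub_norm_le (exp (-ζ * I)) (-exp (ζ * I))
  rw [sub_neg_eq_add, ← two_cos, norm_neg] at h₁
  rw [sub_neg_eq_add, add_comm, ← two_cos, norm_neg] at h₂
  simp only [norm_mul, norm_exp_mul_I, neg_im, neg_neg, Complex.norm_two] at h₁ h₂
  rcases abs_cases ζ.im with ⟨habs, hnn⟩ | ⟨habs, hneg⟩ <;> rw [habs]
  · linarith [Real.exp_le_one_iff.2 (neg_nonpos.2 hnn)]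
  · linarith [Real.exp_le_one_iff.2 hneg.le]

theorem abs_im_le_abs_im_of_sq_eq_sub_sq {z w : ℂ} {s : ℝ} (hs : 0 ≤ s)
    (h : w ^ 2 = z ^ 2 - (s : ℂ) ^ 2) : |z.im| ≤ |w.im| ∧ |w.im| ≤ |z.im| + s := by
  have hre : w.re ^ 2 - w.im ^ 2 = z.re ^ 2 - z.im ^ 2 - s ^ 2 := by
    simpa [sq] using congrArg re h
  have him : w.re * w.im = z.re * z.im := by
    have := congrArg im h
    simp only [sq, mul_im, sub_im, ofReal_im, ofReal_re] at this
    linarith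
  -- multiply the real parts by `w.im ^ 2` and use `(w.re * w.im) ^ 2 = (z.re * z.im) ^ 2`
  have key : (w.im ^ 2 - z.im ^ 2) * (w.im ^ 2 + z.re ^ 2) = s ^ 2 * w.im ^ 2 := by
    linear_combination (w.re * w.im + z.re * z.im) * him - w.im ^ 2 * hre
  have hlow : z.im ^ 2 ≤ w.im ^ 2 := by
    nlinarith [sq_nonneg w.re, sq_nonneg z.re, sq_nonneg w.im, sq_nonneg s]
  have hup : w.im ^ 2 ≤ z.im ^ 2 + s ^ 2 := by
    by_contra! hgt
    have hzero : w.im ^ 2 + z.re ^ 2 ≤ 0 := by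
      nlinarith [sq_nonneg w.re, sq_nonneg z.re, sq_nonneg w.im, sq_nonneg s]
    nlinarith [sq_nonneg w.re, sq_nonneg z.re, sq_nonneg w.im, sq_nonneg s]
  have hup' : w.im ^ 2 ≤ (|z.im| + s) ^ 2 := by
    nlinarith [sq_abs z.im, abs_nonneg z.im]
  refine ⟨sq_le_sq.1 hlow, ?_⟩
  simpa [abs_of_nonneg (add_nonneg (abs_nonneg z.im) hs)] using sq_le_sq.1 hup'

end Complex

theorem Int.exists_nat_sq_add_self_eq (k : ℤ) : ∃ m : ℕ, (m : ℤ) ^ 2 + m = k ^ 2 + k := by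
  rcases le_or_gt 0 k with hk | hk
  · exact ⟨k.toNat, by rw [Int.toNat_of_nonneg hk]⟩
  · exact ⟨(-k - 1).toNat, by rw [Int.toNat_of_nonneg (by omega)]; ring⟩

theorem half_le_sub_of_sq_eq {a b : ℝ} {j k : ℕ} (ha : 0 ≤ a) (hb : 0 ≤ b) (hjk : j < k)
    (ha2 : a ^ 2 = j ^ 2 + j + 1 / 2) (hb2 : b ^ 2 = k ^ 2 + k + 1 / 2) : 1 / 2 ≤ b - a := by
  have hjk' : (j : ℝ) + 1 ≤ k := by exact_mod_cast hjk
  have ha' : a ≤ j + 1 := by nlinarith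
  have hb' : b ≤ k + 1 := by nlinarith
  -- `(b - a) (b + a) = b² - a² ≥ j + k + 1` while `b + a ≤ j + k + 2`
  nlinarith

theorem half_le_abs_sub_of_sq_eq {x y : ℝ} {j k : ℕ} (hx : x ^ 2 = j ^ 2 + j + 1 / 2)
    (hy : y ^ 2 = k ^ 2 + k + 1 / 2) (hxy : x ≠ y) : 1 / 2 ≤ |x - y| := by
  rcases lt_trichotomy j k with hjk | rfl | hjk
  · calc 1 / 2 ≤ |y| - |x| :=
          half_le_sub_of_sq_eq (abs_nonneg x) (abs_nonneg y) hjk (by rwa [sq_abs]) (by rwa [sq_abs])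
      _ ≤ |x - y| := by rw [abs_sub_comm]; exact abs_sub_abs_le_abs_sub y x
  · obtain rfl : x = -y := (sq_eq_sq_iff_eq_or_eq_neg.1 (hx.trans hy.symm)).resolve_left hxy
    nlinarith [abs_mul_abs_self (-y - y), abs_nonneg (-y - y)]
  · calc 1 / 2 ≤ |x| - |y| :=
          half_le_sub_of_sq_eq (abs_nonneg y) (abs_nonneg x) hjk (by rwa [sq_abs]) (by rwa [sq_abs])
      _ ≤ |x - y| := abs_sub_abs_le_abs_sub x y

def fresnelOne (z : ℂ) : ℂ := cos (π * (z ^ 2 - 1 / 4) ^ (1 / 2 : ℂ))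

theorem fresnelOne_eq_cos_of_sq_eq {z w : ℂ} (h : w ^ 2 = z ^ 2 - 1 / 4) :
    fresnelOne z = cos (π * w) :=
  cos_mul_cpow_one_half_eq_of_sq_eq _ h

theorem fresnelOne_eq_tsum (z : ℂ) :
    fresnelOne z = ∑' n : ℕ,
      (-1 : ℂ) ^ n * (π : ℂ) ^ (2 * n) * (z ^ 2 - 1 / 4) ^ n / (Nat.factorial (2 * n) : ℂ) := by
  rw [fresnelOne, cos_eq_tsum]
  congr 1 with n
  rw [mul_pow, pow_mul (_ ^ _), cpow_one_half_sq]
  ring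

theorem differentiable_fresnelOne : Differentiable ℂ fresnelOne :=
  (differentiable_cos_mul_cpow_one_half π).comp (by fun_prop)

theorem fresnelOne_eq_zero_iff {z : ℂ} :
    fresnelOne z = 0 ↔ ∃ k : ℕ, z ^ 2 = k ^ 2 + k + 1 / 2 := by
  rw [fresnelOne, cos_pi_mul_cpow_one_half_eq_zero_iff]
  constructor
  · rintro ⟨k, hk⟩
    obtain ⟨m, hm⟩ := Int.exists_nat_sq_add_self_eq k
    have hmC : (m : ℂ) ^ 2 + m = (k : ℂ) ^ 2 + k := by exact_mod_cast hm
    exact ⟨m, by linear_combination hk - hmC⟩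
  · rintro ⟨k, hk⟩
    exact ⟨k, by push_cast; linear_combination hk⟩

theorem fresnelOne_eq_zero_iff_eq_sqrt {z : ℂ} :
    fresnelOne z = 0 ↔ ∃ k : ℕ, z = (√((k : ℝ) ^ 2 + k + 1 / 2) : ℂ) ∨
      z = -(√((k : ℝ) ^ 2 + k + 1 / 2) : ℂ) := by
  rw [fresnelOne_eq_zero_iff]
  refine exists_congr fun k => ?_
  have hsqrt : ((√((k : ℝ) ^ 2 + k + 1 / 2) : ℝ) : ℂ) ^ 2 = k ^ 2 + k + 1 / 2 := by
    rw [← ofReal_pow, Real.sq_sqrt (by positivity)]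
    push_cast
    ring
  rw [← hsqrt, sq_eq_sq_iff_eq_or_eq_neg]

theorem exists_real_of_fresnelOne_eq_zero {z : ℂ} (hz : fresnelOne z = 0) :
    ∃ x : ℝ, z = x ∧ ∃ k : ℕ, x ^ 2 = k ^ 2 + k + 1 / 2 := by
  obtain ⟨k, hk | hk⟩ := fresnelOne_eq_zero_iff_eq_sqrt.1 hz
  · exact ⟨_, hk, k, Real.sq_sqrt (by positivity)⟩
  · exact ⟨_, hk.trans (ofReal_neg _).symm, k, by rw [neg_sq, Real.sq_sqrt (by positivity)]⟩

theorem half_le_norm_sub_of_fresnelOne_eq_zero {z w : ℂ} (hz : fresnelOne z = 0)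
    (hw : fresnelOne w = 0) (hzw : z ≠ w) : 1 / 2 ≤ ‖z - w‖ := by
  obtain ⟨x, rfl, j, hx⟩ := exists_real_of_fresnelOne_eq_zero hz
  obtain ⟨y, rfl, k, hy⟩ := exists_real_of_fresnelOne_eq_zero hw
  rw [← ofReal_sub, norm_real, Real.norm_eq_abs]
  exact half_le_abs_sub_of_sq_eq hx hy (fun h => hzw (congrArg _ h))

theorem deriv_fresnelOne_ne_zero {z : ℂ} (hz : fresnelOne z = 0) : deriv fresnelOne z ≠ 0 := by
  obtain ⟨k, hk⟩ := fresnelOne_eq_zero_iff.1 hz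
  have hu : z ^ 2 - 1 / 4 = ((k ^ 2 + k + 1 / 4 : ℝ) : ℂ) := by
    rw [hk]
    push_cast
    ring
  have hslit : z ^ 2 - 1 / 4 ∈ slitPlane := by
    rw [hu]
    exact ofReal_mem_slitPlane.2 (by positivity)
  have hz0 : z ≠ 0 := by
    rintro rfl
    have hcast : ((k ^ 2 + k + 1 / 2 : ℝ) : ℂ) = 0 := by
      push_cast
      linear_combination -hk
    exact absurd (ofReal_eq_zero.1 hcast) (by positivity)
  have hinner : HasDerivAt (fun z : ℂ => z ^ 2 - 1 / 4) (2 * z) z := by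
    simpa using (hasDerivAt_pow 2 z).sub_const (1 / 4 : ℂ)
  have hchain : HasDerivAt fresnelOne
      (deriv (fun u => cos (π * u ^ (1 / 2 : ℂ))) (z ^ 2 - 1 / 4) * (2 * z)) z :=
    (differentiable_cos_mul_cpow_one_half _ _).hasDerivAt.comp z hinner
  rw [hchain.deriv]
  exact mul_ne_zero (deriv_cos_mul_cpow_one_half_ne_zero (ofReal_ne_zero.2 Real.pi_ne_zero)
    hslit hz) (mul_ne_zero two_ne_zero hz0)

theorem norm_cos_pi_mul_le_of_sq_eq {z w : ℂ} (h : w ^ 2 = z ^ 2 - 1 / 4) :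
    ‖cos (π * w)‖ ≤ Real.exp (π / 2) * Real.exp (π * |z.im|) := by
  obtain ⟨-, hw⟩ := abs_im_le_abs_im_of_sq_eq_sub_sq (z := z) (w := w) (s := 1 / 2)
    (by norm_num) (by push_cast; linear_combination h)
  calc ‖cos (π * w)‖ ≤ Real.exp (π * |w.im|) := by
        simpa [abs_mul, abs_of_pos Real.pi_pos] using norm_cos_le_exp_abs_im (π * w)
    _ ≤ Real.exp (π / 2 + π * |z.im|) := by
        gcongr
        nlinarith [Real.pi_pos]
    _ = Real.exp (π / 2) * Real.exp (π * |z.im|) := Real.exp_add _ _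

theorem quarter_mul_exp_le_norm_cos_pi_mul_of_sq_eq {z w : ℂ} (h : w ^ 2 = z ^ 2 - 1 / 4)
    (hz : 1 ≤ |z.im|) : 1 / 4 * Real.exp (π * |z.im|) ≤ ‖cos (π * w)‖ := by
  obtain ⟨hw, -⟩ := abs_im_le_abs_im_of_sq_eq_sub_sq (z := z) (w := w) (s := 1 / 2)
    (by norm_num) (by push_cast; linear_combination h)
  have hcos : Real.exp (π * |w.im|) - 1 ≤ 2 * ‖cos (π * w)‖ := by
    simpa [abs_mul, abs_of_pos Real.pi_pos] using exp_abs_im_sub_one_le_two_mul_norm_cos (π * w)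
  have hmono : Real.exp (π * |z.im|) ≤ Real.exp (π * |w.im|) := by
    gcongr
  have htwo : 2 ≤ Real.exp (π * |z.im|) := by
    nlinarith [Real.add_one_le_exp (π * |z.im|), Real.pi_gt_three]
  linarith

/-- `Z₁(λ) = cos(π√(λ² - 1/4))` is a generating function for phase shift at Fresnel
number `𝔣 = 1`. -/
theorem generating_function_fresnel_one
    (Z₁ : ℂ → ℂ)
    (hZ₁ : ∀ z : ℂ, Z₁ z = Complex.cos ((π : ℂ) * (z ^ 2 - 1 / 4) ^ ((1 : ℂ) / 2))) :
    -- the value is independent of the branch of the square root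
    (∀ z w : ℂ, w ^ 2 = z ^ 2 - 1 / 4 → Z₁ z = Complex.cos ((π : ℂ) * w)) ∧
    -- equivalently, Z₁ is given by the everywhere-convergent power series in λ² - 1/4
    (∀ z : ℂ, Z₁ z = ∑' n : ℕ,
      (-1 : ℂ) ^ n * (π : ℂ) ^ (2 * n) * (z ^ 2 - 1 / 4) ^ n / (Nat.factorial (2 * n) : ℂ)) ∧
    -- Z₁ is a generating function for phase shift at 𝔣 = 1
    IsGeneratingPhase 1 Z₁ ∧
    -- the zero set is exactly {±√(k² + k + 1/2) : k ∈ ℕ}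
    {z : ℂ | Z₁ z = 0} =
      {z : ℂ | ∃ k : ℕ, z = (Real.sqrt ((k : ℝ) ^ 2 + k + 1 / 2) : ℂ) ∨
        z = -(Real.sqrt ((k : ℝ) ^ 2 + k + 1 / 2) : ℂ)} ∧
    -- each zero satisfies λ² = l + 1/2 with l = k² + k
    (∀ z : ℂ, Z₁ z = 0 → ∃ k : ℕ, z ^ 2 = ((k : ℂ) ^ 2 + k) + 1 / 2) := by
  obtain rfl : Z₁ = fresnelOne := funext hZ₁
  have sineType : IsSineType fresnelOne :=
    { entire := differentiable_fresnelOne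
      separated := ⟨1 / 2, by norm_num, fun _ hz _ hw =>
        half_le_norm_sub_of_fresnelOne_eq_zero hz hw⟩
      bounds := ⟨Real.exp (π / 2), Real.exp_pos _, 1 / 4, by norm_num, 1, one_pos, fun _ hz =>
        ⟨quarter_mul_exp_le_norm_cos_pi_mul_of_sq_eq (cpow_one_half_sq _) hz,
          norm_cos_pi_mul_le_of_sq_eq (cpow_one_half_sq _)⟩⟩ }
  refine ⟨fun _ _ => fresnelOne_eq_cos_of_sq_eq, fresnelOne_eq_tsum, ⟨sineType, ?_, ?_, ?_⟩,
    Set.ext fun _ => fresnelOne_eq_zero_iff_eq_sqrt, fun _ => fresnelOne_eq_zero_iff.1⟩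
  · intro z hz
    obtain ⟨x, hx, -⟩ := exists_real_of_fresnelOne_eq_zero hz
    exact ⟨x, hx⟩
  · exact fun _ => deriv_fresnelOne_ne_zero
  · intro z hz
    obtain ⟨k, hk⟩ := fresnelOne_eq_zero_iff.1 hz
    exact ⟨k ^ 2 + k, by push_cast; linear_combination hk⟩
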